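/- arXiv:1805.03065 — 2 statements merged into one kernel-verified Lean document; each statement's English description precedes it below -/
import Mathlib

section
/- Let Ω₃ be the Lorentz cone in ℝ³ and let H(w,w) = u|w₁|² + v|w₂|² be a diagonal Ω₃-Hermitian form on ℂ² with u = (1,1,0) and v = (v₁,v₂,v₃) ∈ closure(Ω₃)∖{0}, such that moreover the space of matrices in 𝔤𝔩₂(ℂ) skew-Hermitian with respect to all three components of H has dimension 2 (s = 2). Then the Lie algebra of G(Ω₃,H) — i.e., {A ∈ 𝔤(Ω₃) : ∃B ∈ 𝔤𝔩₂(ℂ), AH(w,w') = H(Bw,w') + H(w,Bw') ∀w,w'} — has dimension at most 2. In particular G(Ω₃,H) does not act transitively on Ω₃. -/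
/-!
Evaluating the defining identity of `𝔤(Ω₃, H)` at `w = w' = e₀` and at `w = w' = e₁` shows that
`u = (1,1,0)` and `v` are both eigenvectors of `A`; the same evaluation of the identity defining
`G(Ω₃, H)` shows that `A` maps `u` and `v` into the plane `span {u, v}`.

The hypothesis `s = 2` excludes `v ∈ ℝ u`: then `H = u (|w₁|² + c |w₂|²)`, whose skew-Hermitian
algebra contains `i I`, `diag(i, -i)` and `!![0, -c; 1, 0]`. Inside the four-dimensional `𝔤(Ω₃)`,
the eigenvector `u` cuts out `span {1, P, Q}`, and since `P` and `Q` do not both fix the line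
`ℝ v`, the eigenvector `v` cuts out one more dimension.

For transitivity, the orbit of `u + v ∈ Ω₃` stays in the plane `span {u, v}`, which cannot contain
the open cone `Ω₃`.
-/

open Matrix Complex Module Submodule ComplexConjugate

def diagForm {ι : Type*} (u v : ι → ℝ) (w w' : Fin 2 → ℂ) : ι → ℂ := fun l =>
  (u l : ℂ) * (conj (w 0) * w' 0) + (v l : ℂ) * (conj (w 1) * w' 1)

lemma three_le_finrank_span_skewAdjoint {ι : Type*} {u v : ι → ℝ} (hv : v ∈ ℝ ∙ u) :
    3 ≤ finrank ℝ (span ℝ {B : Matrix (Fin 2) (Fin 2) ℂ | ∀ w w',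
      diagForm u v (B *ᵥ w) w' + diagForm u v w (B *ᵥ w') = 0}) := by
  obtain ⟨c, rfl⟩ := mem_span_singleton.mp hv
  let B₁ : Matrix (Fin 2) (Fin 2) ℂ := !![I, 0; 0, I]
  let B₂ : Matrix (Fin 2) (Fin 2) ℂ := !![I, 0; 0, -I]
  let B₃ : Matrix (Fin 2) (Fin 2) ℂ := !![0, -(c : ℂ); 1, 0]
  have hli : LinearIndependent ℝ ![B₁, B₂, B₃] := by
    rw [Fintype.linearIndependent_iff]
    intro g hg
    rw [Fin.sum_univ_three] at hg
    have h₂ : g 2 = 0 := by simpa [B₁, B₂, B₃] using congrFun (congrFun hg 1) 0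
    have h₀ : g 0 + g 1 = 0 := by
      simpa [B₁, B₂, B₃] using congrArg im (congrFun (congrFun hg 0) 0)
    have h₁ : g 0 - g 1 = 0 := by
      simpa [B₁, B₂, B₃, sub_eq_add_neg] using congrArg im (congrFun (congrFun hg 1) 1)
    intro i; fin_cases i <;> simp <;> linarith
  have hskew : Set.range ![B₁, B₂, B₃] ⊆ {B : Matrix (Fin 2) (Fin 2) ℂ | ∀ w w',
      diagForm u (c • u) (B *ᵥ w) w' + diagForm u (c • u) w (B *ᵥ w') = 0} := by
    rw [Set.range_subset_iff]
    intro i w w'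
    funext l
    fin_cases i <;> simp [B₁, B₂, B₃, diagForm, dotProduct, Fin.sum_univ_two] <;> ring
  calc 3 = finrank ℝ (span ℝ (Set.range ![B₁, B₂, B₃])) := by
        rw [finrank_span_eq_card hli, Fintype.card_fin]
    _ ≤ _ := finrank_mono (span_mono hskew)

section

variable {ι : Type*} [Fintype ι] {u v : ι → ℝ} {A : Matrix ι ι ℝ} {B : Matrix (Fin 2) (Fin 2) ℂ}

lemma ofReal_mulVec_apply (x : ι → ℝ) (l : ι) :
    (((A *ᵥ x) l : ℝ) : ℂ) = ∑ i, (A l i : ℂ) * (x i : ℂ) := by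
  simp [mulVec, dotProduct]

lemma mulVec_eq_of_isDerivation
    (hB : ∀ w w', (fun l => ∑ i, (A l i : ℂ) * diagForm u v w w' i)
      = diagForm u v (B *ᵥ w) w' + diagForm u v w (B *ᵥ w')) :
    A *ᵥ u = (2 * (B 0 0).re) • u ∧ A *ᵥ v = (2 * (B 1 1).re) • v := by
  constructor <;> funext l <;> apply ofReal_injective
  · have h : ∑ i, (A l i : ℂ) * u i = u l * conj (B 0 0) + u l * B 0 0 := by
      simpa [diagForm] using congrFun (hB ![1, 0] ![1, 0]) l
    rw [ofReal_mulVec_apply, h, ← mul_add, add_comm, add_conj]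
    push_cast [Pi.smul_apply, smul_eq_mul]; ring
  · have h : ∑ i, (A l i : ℂ) * v i = v l * conj (B 1 1) + v l * B 1 1 := by
      simpa [diagForm] using congrFun (hB ![0, 1] ![0, 1]) l
    rw [ofReal_mulVec_apply, h, ← mul_add, add_comm, add_conj]
    push_cast [Pi.smul_apply, smul_eq_mul]; ring

lemma mulVec_eq_of_isIsometry
    (hB : ∀ w w', (fun l => ∑ i, (A l i : ℂ) * diagForm u v w w' i)
      = diagForm u v (B *ᵥ w) (B *ᵥ w')) :
    A *ᵥ u = normSq (B 0 0) • u + normSq (B 1 0) • v ∧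
      A *ᵥ v = normSq (B 0 1) • u + normSq (B 1 1) • v := by
  constructor <;> funext l <;> apply ofReal_injective
  · have h : ∑ i, (A l i : ℂ) * u i
        = u l * (conj (B 0 0) * B 0 0) + v l * (conj (B 1 0) * B 1 0) := by
      simpa [diagForm] using congrFun (hB ![1, 0] ![1, 0]) l
    rw [ofReal_mulVec_apply, h]
    push_cast [Pi.add_apply, Pi.smul_apply, smul_eq_mul, normSq_eq_conj_mul_self]; ring
  · have h : ∑ i, (A l i : ℂ) * v i
        = u l * (conj (B 0 1) * B 0 1) + v l * (conj (B 1 1) * B 1 1) := by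
      simpa [diagForm] using congrFun (hB ![0, 1] ![0, 1]) l
    rw [ofReal_mulVec_apply, h]
    push_cast [Pi.add_apply, Pi.smul_apply, smul_eq_mul, normSq_eq_conj_mul_self]; ring

lemma mulVec_mem_span_pair_of_isIsometry
    (hB : ∀ w w', (fun l => ∑ i, (A l i : ℂ) * diagForm u v w w' i)
      = diagForm u v (B *ᵥ w) (B *ᵥ w')) {x : ι → ℝ} (hx : x ∈ span ℝ {u, v}) :
    A *ᵥ x ∈ span ℝ {u, v} := by
  obtain ⟨a, b, rfl⟩ := mem_span_pair.mp hx
  obtain ⟨hu, hv⟩ := mulVec_eq_of_isIsometry hB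
  rw [mulVec_add, mulVec_smul, mulVec_smul, hu, hv]
  exact mem_span_pair.mpr ⟨a * normSq (B 0 0) + b * normSq (B 0 1),
    a * normSq (B 1 0) + b * normSq (B 1 1), by module⟩

end

def lineStabilizer {R n : Type*} [CommRing R] [Fintype n] (v : n → R) :
    Submodule R (Matrix n n R) where
  carrier := {A | A *ᵥ v ∈ R ∙ v}
  add_mem' ha hb := by simpa [add_mulVec] using add_mem ha hb
  zero_mem' := by simp
  smul_mem' c A ha := by simpa [smul_mulVec] using smul_mem _ c ha

lemma mem_lineStabilizer {R n : Type*} [CommRing R] [Fintype n] {v : n → R}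
    {A : Matrix n n R} : A ∈ lineStabilizer v ↔ ∃ μ : R, A *ᵥ v = μ • v := by
  change A *ᵥ v ∈ R ∙ v ↔ _
  simp only [mem_span_singleton, eq_comm]

/-- Together with `1`, these span the matrices of `𝔤(Ω₃)` having `(1, 1, 0)` as an eigenvector. -/
def boostP : Matrix (Fin 3) (Fin 3) ℝ := !![0, 1, 0; 1, 0, 0; 0, 0, 0]

def boostQ : Matrix (Fin 3) (Fin 3) ℝ := !![0, 0, 1; 0, 0, 1; 1, -1, 0]

lemma boostP_mulVec (v : Fin 3 → ℝ) : boostP *ᵥ v = ![v 1, v 0, 0] := by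
  ext i; fin_cases i <;> simp [boostP, mulVec, dotProduct, Fin.sum_univ_three]

lemma boostQ_mulVec (v : Fin 3 → ℝ) : boostQ *ᵥ v = ![v 2, v 2, v 0 - v 1] := by
  ext i; fin_cases i <;> simp [boostQ, mulVec, dotProduct, Fin.sum_univ_three, sub_eq_add_neg]

lemma mem_span_boost_of_mem_lineStabilizer {lam p q r : ℝ}
    (h : !![lam, p, q; p, lam, r; q, -r, lam] ∈ lineStabilizer ![1, 1, 0]) :
    !![lam, p, q; p, lam, r; q, -r, lam] ∈ span ℝ (Set.range ![1, boostP, boostQ]) := by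
  obtain ⟨μ, hμ⟩ := mem_lineStabilizer.mp h
  have hrq : r = q := by
    have : q - r = 0 := by
      simpa [mulVec, dotProduct, Fin.sum_univ_three, sub_eq_add_neg] using congrFun hμ 2
    linarith
  subst hrq
  refine (mem_span_range_iff_exists_fun ℝ).mpr ⟨![lam, p, r], ?_⟩
  ext i j
  fin_cases i <;> fin_cases j <;> simp [Fin.sum_univ_three, boostP, boostQ, one_apply]

lemma not_span_boost_le_lineStabilizer {v : Fin 3 → ℝ} (hv : v ∉ ℝ ∙ ![1, 1, 0]) :
    ¬ span ℝ (Set.range ![1, boostP, boostQ]) ≤ lineStabilizer v := by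
  intro h
  obtain ⟨a, ha⟩ := mem_lineStabilizer.mp (h (subset_span ⟨1, rfl⟩) : boostP ∈ _)
  obtain ⟨b, hb⟩ := mem_lineStabilizer.mp (h (subset_span ⟨2, rfl⟩) : boostQ ∈ _)
  rw [boostP_mulVec] at ha
  rw [boostQ_mulVec] at hb
  have ha₀ : v 1 = a * v 0 := by simpa using congrFun ha 0
  have ha₁ : v 0 = a * v 1 := by simpa using congrFun ha 1
  have ha₂ : 0 = a * v 2 := by simpa using congrFun ha 2
  have hb₀ : v 2 = b * v 0 := by simpa using congrFun hb 0
  have hb₂ : v 0 - v 1 = b * v 2 := by simpa using congrFun hb 2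
  have hv₂ : v 2 = 0 := by
    rcases eq_zero_or_eq_zero_of_mul_eq_zero ha₂.symm with rfl | h₂
    · rw [hb₀, ha₁, zero_mul, mul_zero]
    · exact h₂
  have hv₁ : v 1 = v 0 := by
    rw [hv₂, mul_zero] at hb₂
    linarith
  exact hv (mem_span_singleton.mpr ⟨v 0, by ext i; fin_cases i <;> simp [hv₁, hv₂]⟩)

lemma finrank_span_lieAlgebra_le_two {v : Fin 3 → ℝ} (hv : v ∉ ℝ ∙ ![1, 1, 0]) :
    finrank ℝ (span ℝ {A : Matrix (Fin 3) (Fin 3) ℝ |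
        (∃ lam p q r : ℝ, A = !![lam, p, q; p, lam, r; q, -r, lam]) ∧
        ∃ B : Matrix (Fin 2) (Fin 2) ℂ, ∀ w w' : Fin 2 → ℂ,
          (fun l => ∑ i, (A l i : ℂ) * diagForm ![1, 1, 0] v w w' i)
            = diagForm ![1, 1, 0] v (B *ᵥ w) w' + diagForm ![1, 1, 0] v w (B *ᵥ w')}) ≤ 2 := by
  set L := span ℝ (Set.range ![1, boostP, boostQ])
  refine Nat.le_of_lt_succ ?_
  calc _ ≤ finrank ℝ ↥(L ⊓ lineStabilizer v) := by
        refine finrank_mono (span_le.mpr ?_)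
        rintro A ⟨⟨lam, p, q, r, rfl⟩, B, hB⟩
        obtain ⟨hu, hv⟩ := mulVec_eq_of_isDerivation hB
        exact ⟨mem_span_boost_of_mem_lineStabilizer (mem_lineStabilizer.mpr ⟨_, hu⟩),
          mem_lineStabilizer.mpr ⟨_, hv⟩⟩
    _ < finrank ℝ L :=
        finrank_lt_finrank_of_lt (inf_lt_left.mpr (not_span_boost_le_lineStabilizer hv))
    _ ≤ 3 := finrank_range_le_card _

def lorentzCone : Set (Fin 3 → ℝ) := {x | x 1 ^ 2 + x 2 ^ 2 < x 0 ^ 2 ∧ 0 < x 0}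

lemma isOpen_lorentzCone : IsOpen lorentzCone := by
  rw [lorentzCone, Set.ofPred_and]
  exact (isOpen_lt (by fun_prop) (by fun_prop)).inter (isOpen_lt continuous_const (by fun_prop))

lemma add_mem_lorentzCone {v : Fin 3 → ℝ} (hv₁ : v 1 ^ 2 + v 2 ^ 2 ≤ v 0 ^ 2)
    (hv₀ : 0 ≤ v 0) (hv : v ∉ ℝ ∙ ![1, 1, 0]) : ![1, 1, 0] + v ∈ lorentzCone := by
  have hlt : v 1 < v 0 := by
    refine lt_of_le_of_ne (abs_le_of_sq_le_sq' (by nlinarith) hv₀).2 fun h => hv ?_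
    have hv₂ : v 2 = 0 := by nlinarith
    exact mem_span_singleton.mpr ⟨v 0, by ext i; fin_cases i <;> simp [h, hv₂]⟩
  show (1 + v 1) ^ 2 + (0 + v 2) ^ 2 < (1 + v 0) ^ 2 ∧ 0 < 1 + v 0
  constructor <;> nlinarith

lemma exists_mem_notMem_span_pair {E : Type*} [NormedAddCommGroup E] [NormedSpace ℝ E]
    [FiniteDimensional ℝ E] (hE : 2 < finrank ℝ E) {s : Set E} (hs : IsOpen s)
    (hne : s.Nonempty) (u v : E) : ∃ y ∈ s, y ∉ span ℝ {u, v} := by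
  by_contra! h
  have htop : span ℝ {u, v} = ⊤ :=
    eq_top_of_nonempty_interior' _ (hne.mono (hs.subset_interior_iff.mpr h))
  have hle := finrank_range_le_card (R := ℝ) ![u, v]
  rw [range_cons_cons_empty, Set.finrank, htop, finrank_top, Fintype.card_fin] at hle
  omega

lemma not_transitive_on_lorentzCone {v : Fin 3 → ℝ} (hv₁ : v 1 ^ 2 + v 2 ^ 2 ≤ v 0 ^ 2)
    (hv₀ : 0 ≤ v 0) (hv : v ∉ ℝ ∙ ![1, 1, 0]) :
    ¬ ∀ x ∈ lorentzCone, ∀ y ∈ lorentzCone, ∃ A : Matrix (Fin 3) (Fin 3) ℝ,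
      (IsUnit A ∧ A.mulVec '' lorentzCone = lorentzCone ∧
        ∃ B : Matrix (Fin 2) (Fin 2) ℂ, IsUnit B ∧ ∀ w w' : Fin 2 → ℂ,
          (fun l => ∑ i, (A l i : ℂ) * diagForm ![1, 1, 0] v w w' i)
            = diagForm ![1, 1, 0] v (B *ᵥ w) (B *ᵥ w')) ∧
      A.mulVec x = y := by
  intro htrans
  have hx := add_mem_lorentzCone hv₁ hv₀ hv
  obtain ⟨y, hy, hy_notMem⟩ :=
    exists_mem_notMem_span_pair (by simp) isOpen_lorentzCone ⟨_, hx⟩ ![1, 1, 0] v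
  obtain ⟨A, ⟨-, -, B, -, hB⟩, rfl⟩ := htrans _ hx y hy
  exact hy_notMem (mulVec_mem_span_pair_of_isIsometry hB
    (add_mem (subset_span (by simp)) (subset_span (by simp))))

theorem stmt_16_general (v : Fin 3 → ℝ) (hv1 : (v 1) ^ 2 + (v 2) ^ 2 ≤ (v 0) ^ 2)
    (hv2 : 0 ≤ v 0)
    (Ω₃ : Set (Fin 3 → ℝ))
    (hΩ₃ : Ω₃ = {x | (x 1) ^ 2 + (x 2) ^ 2 < (x 0) ^ 2 ∧ 0 < x 0})
    (u : Fin 3 → ℝ) (hu : u = ![1, 1, 0])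
    (Hf : (Fin 2 → ℂ) → (Fin 2 → ℂ) → (Fin 3 → ℂ))
    (hHf : Hf = fun w w' => fun l =>
      (u l : ℂ) * ((starRingEnd ℂ) (w 0) * w' 0) +
      (v l : ℂ) * ((starRingEnd ℂ) (w 1) * w' 1))
    (hs : Module.finrank ℝ (Submodule.span ℝ
      {B : Matrix (Fin 2) (Fin 2) ℂ | ∀ w w' : Fin 2 → ℂ,
        Hf (B.mulVec w) w' + Hf w (B.mulVec w') = 0}) = 2) :
    Module.finrank ℝ (Submodule.span ℝ
      {A : Matrix (Fin 3) (Fin 3) ℝ |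
        (∃ lam p q r : ℝ, A = !![lam, p, q; p, lam, r; q, -r, lam]) ∧
        ∃ B : Matrix (Fin 2) (Fin 2) ℂ, ∀ w w' : Fin 2 → ℂ,
          (fun l => ∑ i, (A l i : ℂ) * Hf w w' i)
            = Hf (B.mulVec w) w' + Hf w (B.mulVec w')}) ≤ 2 ∧
    ¬ ∀ x ∈ Ω₃, ∀ y ∈ Ω₃, ∃ A : Matrix (Fin 3) (Fin 3) ℝ,
      (IsUnit A ∧ A.mulVec '' Ω₃ = Ω₃ ∧
        ∃ B : Matrix (Fin 2) (Fin 2) ℂ, IsUnit B ∧ ∀ w w' : Fin 2 → ℂ,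
          (fun l => ∑ i, (A l i : ℂ) * Hf w w' i)
            = Hf (B.mulVec w) (B.mulVec w')) ∧
      A.mulVec x = y := by
  subst hΩ₃ hu hHf
  have hv : v ∉ ℝ ∙ ![1, 1, 0] := fun h =>
    (Nat.lt_of_succ_le (three_le_finrank_span_skewAdjoint h)).ne' hs
  exact ⟨finrank_span_lieAlgebra_le_two hv, not_transitive_on_lorentzCone hv1 hv2 hv⟩

/-- For the diagonal `Ω₃`-Hermitian form `H(w,w) = u|w₁|² + v|w₂|²` on `ℂ²`
with `u = (1,1,0)` and `v ∈ closure(Ω₃) \ {0}`, if the space of matrices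
skew-Hermitian with respect to all three components of `H` has dimension 2,
then the Lie algebra of `G(Ω₃,H)` has dimension at most 2; in particular
`G(Ω₃,H)` does not act transitively on `Ω₃`. -/
theorem stmt_16 (v : Fin 3 → ℝ) (hv1 : (v 1) ^ 2 + (v 2) ^ 2 ≤ (v 0) ^ 2)
    (hv2 : 0 ≤ v 0) (hv3 : v ≠ 0)
    (Ω₃ : Set (Fin 3 → ℝ))
    (hΩ₃ : Ω₃ = {x | (x 1) ^ 2 + (x 2) ^ 2 < (x 0) ^ 2 ∧ 0 < x 0})
    (u : Fin 3 → ℝ) (hu : u = ![1, 1, 0])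
    (Hf : (Fin 2 → ℂ) → (Fin 2 → ℂ) → (Fin 3 → ℂ))
    (hHf : Hf = fun w w' => fun l =>
      (u l : ℂ) * ((starRingEnd ℂ) (w 0) * w' 0) +
      (v l : ℂ) * ((starRingEnd ℂ) (w 1) * w' 1))
    (hs : Module.finrank ℝ (Submodule.span ℝ
      {B : Matrix (Fin 2) (Fin 2) ℂ | ∀ w w' : Fin 2 → ℂ,
        Hf (B.mulVec w) w' + Hf w (B.mulVec w') = 0}) = 2) :
    Module.finrank ℝ (Submodule.span ℝ
      {A : Matrix (Fin 3) (Fin 3) ℝ |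
        (∃ lam p q r : ℝ, A = !![lam, p, q; p, lam, r; q, -r, lam]) ∧
        ∃ B : Matrix (Fin 2) (Fin 2) ℂ, ∀ w w' : Fin 2 → ℂ,
          (fun l => ∑ i, (A l i : ℂ) * Hf w w' i)
            = Hf (B.mulVec w) w' + Hf w (B.mulVec w')}) ≤ 2 ∧
    ¬ ∀ x ∈ Ω₃, ∀ y ∈ Ω₃, ∃ A : Matrix (Fin 3) (Fin 3) ℝ,
      (IsUnit A ∧ A.mulVec '' Ω₃ = Ω₃ ∧
        ∃ B : Matrix (Fin 2) (Fin 2) ℂ, IsUnit B ∧ ∀ w w' : Fin 2 → ℂ,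
          (fun l => ∑ i, (A l i : ℂ) * Hf w w' i)
            = Hf (B.mulVec w) (B.mulVec w')) ∧
      A.mulVec x = y :=
  stmt_16_general v hv1 hv2 Ω₃ hΩ₃ u hu Hf hHf hs
end

section
/- Let N ≥ 1 and Ĥ : ℂ^N × ℂ^N → ℂ⁴, Ĥ(w,w') = (Σⱼ conj(wⱼ)w'ⱼ, Σⱼ conj(wⱼ)w'ⱼ, 0, 0). Suppose Φ : ℂ⁴ → ℂ^N is ℂ-linear and for every w ∈ ℂ^N the map ℝ⁴ → ℝ⁴, x ↦ Im Ĥ(w, Φ(x)), belongs to 𝔤(Ω₆) = {((λ,p,q,r),(p,λ,s,t),(q,−s,λ,y),(r,−t,−y,λ)) : λ,p,q,r,s,t,y ∈ ℝ}. Then Φ = 0. -/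
open Matrix

/-! The image of `x ↦ Im Ĥ(w, Φ x)` has equal first two rows and vanishing last two. In a matrix
of `𝔤(Ω₆)` the vanishing rows force `λ = q = r = s = t = 0`, and then the equality of the first two
rows `(λ, p, 0, 0) = (p, λ, 0, 0)` forces `p = 0`. Hence `Im ⟨w, Φ x⟩ = 0` for all `w`, and testing
against `w = eⱼ` and `w = i eⱼ` kills the imaginary and real parts of every coefficient of `Φ`. -/

theorem eq_zero_of_ite_rows_eq_lorentzAlg (v : Fin 4 → ℝ) {l p q r s t y : ℝ}
    (h : (Matrix.of fun (i x : Fin 4) => if i = 0 ∨ i = 1 then v x else (0 : ℝ))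
      = !![l, p, q, r; p, l, s, t; q, -s, l, y; r, -t, -y, l]) :
    v = 0 := by
  have entry := Matrix.ext_iff.mpr h
  have e00 := entry 0 0
  have e01 := entry 0 1
  have e02 := entry 0 2
  have e03 := entry 0 3
  have e10 := entry 1 0
  have e20 := entry 2 0
  have e22 := entry 2 2
  have e30 := entry 3 0
  simp only [Fin.isValue, of_apply, zero_ne_one, or_false, ↓reduceIte, cons_val', cons_val_zero,
    cons_val_fin_one, cons_val_one, cons_val, one_ne_zero, or_true, Fin.reduceEq,
    or_self] at e00 e01 e02 e03 e10 e20 e22 e30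
  funext x
  fin_cases x <;> simp <;> linarith

theorem Complex.eq_zero_of_forall_im_sum_conj_mul_eq_zero {ι : Type*} [Fintype ι]
    [DecidableEq ι] {a : ι → ℂ} (h : ∀ w : ι → ℂ, (∑ j, starRingEnd ℂ (w j) * a j).im = 0) :
    a = 0 := by
  funext j
  have him := h (Pi.single j 1)
  have hre := h (Pi.single j Complex.I)
  simp only [Pi.single_apply, apply_ite, map_one, map_zero, ite_mul, one_mul, zero_mul,
    Finset.sum_ite_eq', Finset.mem_univ, ↓reduceIte, conj_I, neg_mul, neg_im, mul_im, I_re, I_im,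
    zero_add, neg_eq_zero] at him hre
  exact Complex.ext hre him

theorem stmt_17_general (N : ℕ) (φ : Fin N → Fin 4 → ℂ)
    (h : ∀ w : Fin N → ℂ, ∃ l p q r s t y : ℝ,
      (Matrix.of fun (i x : Fin 4) =>
          if i = 0 ∨ i = 1 then (∑ j, (starRingEnd ℂ) (w j) * φ j x).im
          else (0 : ℝ))
        = !![l, p, q, r; p, l, s, t; q, -s, l, y; r, -t, -y, l]) :
    φ = 0 := by
  have him_eq_zero : ∀ w : Fin N → ℂ, ∀ x, (∑ j, starRingEnd ℂ (w j) * φ j x).im = 0 := by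
    intro w
    obtain ⟨l, p, q, r, s, t, y, hw⟩ := h w
    exact congrFun (eq_zero_of_ite_rows_eq_lorentzAlg _ hw)
  funext j x
  exact congrFun (Complex.eq_zero_of_forall_im_sum_conj_mul_eq_zero fun w => him_eq_zero w x) j

/-- Let `Ĥ(w,w') = (∑ conj(wⱼ)w'ⱼ, ∑ conj(wⱼ)w'ⱼ, 0, 0)` on `ℂᴺ`. If a
`ℂ`-linear map `Φ : ℂ⁴ → ℂᴺ` (with matrix `φ`) is such that for every `w` the
real matrix of `x ↦ Im Ĥ(w, Φ(x))` lies in `𝔤(Ω₆)`, then `Φ = 0`. -/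
theorem stmt_17 (N : ℕ) (hN : 1 ≤ N) (φ : Fin N → Fin 4 → ℂ)
    (h : ∀ w : Fin N → ℂ, ∃ l p q r s t y : ℝ,
      (Matrix.of fun (i x : Fin 4) =>
          if i = 0 ∨ i = 1 then (∑ j, (starRingEnd ℂ) (w j) * φ j x).im
          else (0 : ℝ))
        = !![l, p, q, r; p, l, s, t; q, -s, l, y; r, -t, -y, l]) :
    φ = 0 :=
  stmt_17_general N φ h
end
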